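/- arXiv:1004.2483 — 3 statements merged into one kernel-verified Lean document; each statement's English description precedes it below -/
import Mathlib

section
/- Let F be a field of characteristic not 2, let a, b ∈ F* and let t ∈ F* be a sum of squares in F. If the quadratic form ⟨1, a, b, -ab⟩ is not weakly isotropic over F (i.e., no multiple n × ⟨1,a,b,-ab⟩ is isotropic), then ⟨1, a, b, -ab⟩ remains not weakly isotropic over F(√t). -/
open scoped BigOperators ENat Classical

namespace QF

variable {F : Type*} [Field F]

/-- Value of the diagonal quadratic form with coefficients `d` at the vector `v`. -/
def qval {ι : Type*} [Fintype ι] (d : ι → F) (v : ι → F) : F :=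
  ∑ i, d i * v i ^ 2

/-- A (diagonal) quadratic form is isotropic if it has a nontrivial zero. -/
def Isotropic {ι : Type*} [Fintype ι] (d : ι → F) : Prop :=
  ∃ v : ι → F, v ≠ 0 ∧ qval d v = 0

def Anisotropic {ι : Type*} [Fintype ι] (d : ι → F) : Prop :=
  ¬ Isotropic d

/-- Orthogonal sum of `n` copies of the form `d`. -/
def copies (n : ℕ) {ι : Type*} (d : ι → F) : Fin n × ι → F :=
  fun p => d p.2

/-- Orthogonal sum of two diagonal forms. -/
def sumForm {ι κ : Type*} (d : ι → F) (e : κ → F) : ι ⊕ κ → F :=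
  Sum.elim d e

/-- A form is weakly isotropic if some multiple `n × q`, `n ≥ 1`, is isotropic. -/
def WeaklyIsotropic {ι : Type*} [Fintype ι] (d : ι → F) : Prop :=
  ∃ n : ℕ, 1 ≤ n ∧ Isotropic (copies n d)

/-- Isometry of diagonal quadratic forms. -/
def Isometric {ι κ : Type*} [Fintype ι] [Fintype κ] (d : ι → F) (e : κ → F) : Prop :=
  ∃ f : (ι → F) ≃ₗ[F] (κ → F), ∀ v, qval e (f v) = qval d v

/-- The hyperbolic form of dimension `2m`, i.e. `m × ⟨1,-1⟩`. -/
def hypForm (F : Type*) [Field F] (m : ℕ) : Fin m ⊕ Fin m → F :=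
  Sum.elim (fun _ => (1 : F)) (fun _ => (-1 : F))

def Hyperbolic {ι : Type*} [Fintype ι] (d : ι → F) : Prop :=
  ∃ m : ℕ, Isometric d (hypForm F m)

/-- A form is torsion if some multiple `n × q`, `n ≥ 1`, is hyperbolic. -/
def Torsion {ι : Type*} [Fintype ι] (d : ι → F) : Prop :=
  ∃ n : ℕ, 1 ≤ n ∧ Hyperbolic (copies n d)

/-- `e` is a subform of `d` : `d ≅ e ⊥ τ` for some form `τ`. -/
def IsSubform {ι κ : Type*} [Fintype ι] [Fintype κ] (e : κ → F) (d : ι → F) : Prop :=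
  ∃ (m : ℕ) (τ : Fin m → F), Isometric d (sumForm e τ)

/-- `e` is similar to a subform of `d`. -/
def SimSubform {ι κ : Type*} [Fintype ι] [Fintype κ] (e : κ → F) (d : ι → F) : Prop :=
  ∃ c : F, c ≠ 0 ∧ IsSubform (fun i => c * e i) d

/-- The `ℓ`-fold Pfister form `⟨⟨a₁,…,a_ℓ⟩⟩ = ⊗ᵢ ⟨1, aᵢ⟩`, with coefficient
`∏ i ∈ S, a i` at the index `S : Finset (Fin ℓ)`. -/
def pfister {ℓ : ℕ} (a : Fin ℓ → F) : Finset (Fin ℓ) → F :=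
  fun S => ∏ i ∈ S, a i

/-- `d` is a Pfister neighbor of the `ℓ`-fold Pfister form `⟨⟨a⟩⟩`. -/
def IsPfisterNeighbor {ι : Type*} [Fintype ι] {ℓ : ℕ} (d : ι → F) (a : Fin ℓ → F) : Prop :=
  2 ^ ℓ < 2 * Fintype.card ι ∧ SimSubform d (pfister a)

/-- Witt equivalence of diagonal forms. -/
def WittEquiv {ι κ : Type*} [Fintype ι] [Fintype κ] (d : ι → F) (e : κ → F) : Prop :=
  ∃ m k : ℕ, Isometric (sumForm d (hypForm F m)) (sumForm e (hypForm F k))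

/-- An ordering of the field `F`, given by its positive cone. -/
structure FieldOrdering (F : Type*) [Field F] where
  P : Set F
  add_mem : ∀ x y : F, x ∈ P → y ∈ P → x + y ∈ P
  mul_mem : ∀ x y : F, x ∈ P → y ∈ P → x * y ∈ P
  total : ∀ x : F, x ∈ P ∨ -x ∈ P
  neg_one_notMem : (-1 : F) ∉ P

/-- The signature of a (nondegenerate diagonal) form at an ordering. -/
noncomputable def sgn {ι : Type*} [Fintype ι] (P : FieldOrdering F) (d : ι → F) : ℤ :=
  ∑ i, if d i ∈ P.P then 1 else -1

/-- The Harrison set `H(a) = {P : a >_P 0}`. -/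
def Harrison (F : Type*) [Field F] (a : F) : Set (FieldOrdering F) :=
  {P | a ∈ P.P ∧ -a ∉ P.P}

/-- The Harrison topology on the space of orderings. -/
instance orderingTopology (F : Type*) [Field F] : TopologicalSpace (FieldOrdering F) :=
  .generateFrom {s | ∃ a : F, a ≠ 0 ∧ s = Harrison F a}

/-- `F` satisfies SAP: every clopen subset of the space of orderings is a Harrison set. -/
def IsSAP (F : Type*) [Field F] : Prop :=
  ∀ s : Set (FieldOrdering F), IsClopen s → ∃ a : F, a ≠ 0 ∧ s = Harrison F a

/-- Totally indefinite: indefinite at every ordering of `F`. -/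
def TotallyIndefinite {ι : Type*} [Fintype ι] (d : ι → F) : Prop :=
  ∀ P : FieldOrdering F, (sgn P d).natAbs < Fintype.card ι

/-- The `u`-invariant: supremum of dimensions of anisotropic torsion forms. -/
noncomputable def uInv (F : Type*) [Field F] : ℕ∞ :=
  sSup {n : ℕ∞ | ∃ (m : ℕ) (d : Fin m → F), Anisotropic d ∧ Torsion d ∧ n = m}

/-- The Hasse number `ũ`: supremum of dimensions of anisotropic totally indefinite forms. -/
noncomputable def hasseNumber (F : Type*) [Field F] : ℕ∞ :=
  sSup {n : ℕ∞ | ∃ (m : ℕ) (d : Fin m → F), (∀ i, d i ≠ 0) ∧ Anisotropic d ∧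
    TotallyIndefinite d ∧ n = m}

/-- `x` is a sum of `m` squares. -/
def IsSumSqOf (m : ℕ) (x : F) : Prop :=
  ∃ f : Fin m → F, x = ∑ i, f i ^ 2

/-- The Pythagoras number of `F`. -/
noncomputable def pythNumber (F : Type*) [Field F] : ℕ∞ :=
  sInf {p : ℕ∞ | ∃ m : ℕ, p = m ∧ ∀ x : F, IsSumSq x → IsSumSqOf m x}

/-- Property `S₁`: for every torsion binary form `β` there is `n ≥ 1` with
`(n × ⟨1⟩) ⊥ β` isotropic. -/
def HasS1 (F : Type*) [Field F] : Prop :=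
  ∀ β : Fin 2 → F, (∀ i, β i ≠ 0) → Torsion β →
    ∃ n : ℕ, 1 ≤ n ∧ Isotropic (sumForm (fun _ : Fin n => (1 : F)) β)

/-- The Pythagorean closure of `F` inside an algebraic closure: the smallest
subfield containing `F` in which every sum of two squares is a square. -/
noncomputable def pythClosure (F : Type*) [Field F] : Subfield (AlgebraicClosure F) :=
  sInf {K | Set.range (algebraMap F (AlgebraicClosure F)) ⊆ K ∧
    ∀ x ∈ K, ∀ y ∈ K, ∃ z ∈ K, z ^ 2 = x ^ 2 + y ^ 2}

/-- The form `d` over `F` becomes isotropic over the Pythagorean closure of `F`. -/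
def IsotropicOverPyth {ι : Type*} [Fintype ι] (d : ι → F) : Prop :=
  ∃ v : ι → AlgebraicClosure F, (∀ i, v i ∈ pythClosure F) ∧ v ≠ 0 ∧
    ∑ i, algebraMap F (AlgebraicClosure F) (d i) * v i ^ 2 = 0

end QF

/-!
Write `F(√t) = F ⊕ F·s` with `s² = t`. If `q(x + y s) = 0` over `F(√t)`, the `F`-component gives
`q(x) + t q(y) = 0` (when `s ∉ F`; otherwise the zero already lies over `F`). Writing
`t = c₁² + ⋯ + c_m²`, the vector `(x, c₁ y, …, c_m y)` is a nontrivial zero of `(m + 1) × q`.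
Applied to `q = n × ⟨1, a, b, -ab⟩`, isotropy of `n × q` over `F(√t)` makes some multiple of `q`
isotropic over `F`.
-/

namespace QF

variable {F : Type*} [Field F] {ι : Type*} [Fintype ι]

theorem _root_.IsSumSq.exists_isSumSqOf {t : F} (ht : IsSumSq t) : ∃ m, IsSumSqOf m t := by
  induction ht with
  | zero => exact ⟨0, ![], by simp⟩
  | sq_add a _ ih =>
    obtain ⟨m, c, rfl⟩ := ih
    exact ⟨m + 1, Fin.cons a c, by simp [Fin.sum_univ_succ, sq]⟩

theorem qval_smul (d : ι → F) (c : F) (v : ι → F) : qval d (c • v) = c ^ 2 * qval d v := by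
  simp only [qval, Finset.mul_sum, Pi.smul_apply, smul_eq_mul]
  exact Finset.sum_congr rfl fun i _ => by ring

theorem qval_copies {k : ℕ} (d : ι → F) (w : Fin k → ι → F) :
    qval (copies k d) (Function.uncurry w) = ∑ j, qval d (w j) :=
  Fintype.sum_prod_type _

theorem Isotropic.of_comp_equiv {κ : Type*} [Fintype κ] {d : κ → F} (σ : ι ≃ κ)
    (h : Isotropic (d ∘ σ)) : Isotropic d := by
  obtain ⟨v, hv0, hv⟩ := h
  refine ⟨v ∘ σ.symm, fun h0 => hv0 ?_, ?_⟩
  · funext i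
    simpa using congr_fun h0 (σ i)
  · rw [← hv, qval, ← σ.sum_comp]
    simp [qval]

theorem WeaklyIsotropic.of_copies {n : ℕ} {d : ι → F} (hn : 1 ≤ n)
    (h : WeaklyIsotropic (copies n d)) : WeaklyIsotropic d := by
  obtain ⟨k, hk, hiso⟩ := h
  let σ : Fin k × (Fin n × ι) ≃ Fin (k * n) × ι :=
    (Equiv.prodAssoc _ _ _).symm.trans (finProdFinEquiv.prodCongr (Equiv.refl ι))
  exact ⟨k * n, Nat.mul_pos hk hn, Isotropic.of_comp_equiv (d := copies (k * n) d) σ hiso⟩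

theorem WeaklyIsotropic.of_qval_add_mul_qval_eq_zero {d x y : ι → F} {t : F} (ht : IsSumSq t)
    (ht0 : t ≠ 0) (hxy : x ≠ 0 ∨ y ≠ 0) (h : qval d x + t * qval d y = 0) :
    WeaklyIsotropic d := by
  obtain ⟨m, c, rfl⟩ := ht.exists_isSumSqOf
  let w : Fin (m + 1) → ι → F := Fin.cons x fun j => c j • y
  refine ⟨m + 1, m.succ_pos, Function.uncurry w, fun h0 => ?_, ?_⟩
  · rcases hxy with hx | hy
    · obtain ⟨i, hi⟩ := Function.ne_iff.mp hx
      exact hi (by simpa [w] using congr_fun h0 (0, i))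
    · obtain ⟨i, hi⟩ := Function.ne_iff.mp hy
      obtain ⟨j, hj⟩ : ∃ j, c j ≠ 0 := by
        by_contra! hc
        exact ht0 (by simp [hc])
      exact mul_ne_zero hj hi (by simpa [w] using congr_fun h0 (j.succ, i))
  · rw [qval_copies, Fin.sum_univ_succ]
    simpa only [w, Fin.cons_zero, Fin.cons_succ, qval_smul, ← Finset.sum_mul] using h

section QuadraticExtension

variable {K : Type*} [Field K] [Algebra F K] {s : K} {t : F}

theorem exists_eq_add_mul_of_adjoin_eq_top (hs : s ^ 2 = algebraMap F K t)
    (hgen : Algebra.adjoin F {s} = ⊤) (w : K) :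
    ∃ u v : F, w = algebraMap F K u + algebraMap F K v * s := by
  have hw : w ∈ Algebra.adjoin F {s} := hgen ▸ Algebra.mem_top
  induction hw using Algebra.adjoin_induction with
  | mem x hx =>
    rw [Set.mem_singleton_iff.mp hx]
    exact ⟨0, 1, by simp⟩
  | algebraMap r => exact ⟨r, 0, by simp⟩
  | add x y _ _ ihx ihy =>
    obtain ⟨u₁, v₁, rfl⟩ := ihx
    obtain ⟨u₂, v₂, rfl⟩ := ihy
    exact ⟨u₁ + u₂, v₁ + v₂, by simp only [map_add]; ring⟩
  | mul x y _ _ ihx ihy =>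
    obtain ⟨u₁, v₁, rfl⟩ := ihx
    obtain ⟨u₂, v₂, rfl⟩ := ihy
    refine ⟨u₁ * u₂ + v₁ * v₂ * t, u₁ * v₂ + v₁ * u₂, ?_⟩
    simp only [map_add, map_mul]
    linear_combination (algebraMap F K v₁ * algebraMap F K v₂) * hs

theorem eq_zero_of_add_mul_eq_zero (hsF : s ∉ Set.range (algebraMap F K)) {u v : F}
    (h : algebraMap F K u + algebraMap F K v * s = 0) : u = 0 ∧ v = 0 := by
  obtain rfl | hv := eq_or_ne v 0
  · simpa using h
  · refine absurd ⟨-u / v, ?_⟩ hsF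
    rw [map_div₀, map_neg, div_eq_iff (by simpa using hv)]
    linear_combination -h

theorem qval_map (d v : ι → F) :
    qval (fun i => algebraMap F K (d i)) (fun i => algebraMap F K (v i)) =
      algebraMap F K (qval d v) := by
  simp [qval]

theorem qval_map_add_mul (hs : s ^ 2 = algebraMap F K t) (d x y : ι → F) :
    qval (fun i => algebraMap F K (d i)) (fun i => algebraMap F K (x i) + algebraMap F K (y i) * s)
      = algebraMap F K (qval d x + t * qval d y)
        + algebraMap F K (2 * ∑ i, d i * x i * y i) * s := by
  simp only [qval, map_add, map_mul, map_sum, Finset.mul_sum, Finset.sum_mul,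
    ← Finset.sum_add_distrib, map_pow, map_ofNat]
  exact Finset.sum_congr rfl fun i _ => by
    linear_combination (algebraMap F K (d i) * algebraMap F K (y i) ^ 2) * hs

theorem exists_qval_add_mul_qval_eq_zero (hs : s ^ 2 = algebraMap F K t)
    (hgen : Algebra.adjoin F {s} = ⊤) {d : ι → F} (h : Isotropic fun i => algebraMap F K (d i)) :
    ∃ x y : ι → F, (x ≠ 0 ∨ y ≠ 0) ∧ qval d x + t * qval d y = 0 := by
  obtain ⟨V, hV0, hV⟩ := h
  choose x y hxy using fun i => exists_eq_add_mul_of_adjoin_eq_top hs hgen (V i)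
  obtain rfl : V = fun i => algebraMap F K (x i) + algebraMap F K (y i) * s := funext hxy
  by_cases hsF : s ∈ Set.range (algebraMap F K)
  · obtain ⟨u, rfl⟩ := hsF
    have hV_map : (fun i => algebraMap F K (x i) + algebraMap F K (y i) * algebraMap F K u) =
        fun i => algebraMap F K (x i + y i * u) := by simp
    rw [hV_map] at hV hV0
    rw [qval_map, map_eq_zero] at hV
    refine ⟨fun i => x i + y i * u, 0, Or.inl fun h0 => hV0 ?_, by simpa [qval] using hV⟩
    funext i
    rw [show x i + y i * u = 0 from congr_fun h0 i, map_zero, Pi.zero_apply]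
  · rw [qval_map_add_mul hs] at hV
    refine ⟨x, y, ?_, (eq_zero_of_add_mul_eq_zero hsF hV).1⟩
    by_contra! h0
    obtain ⟨rfl, rfl⟩ := h0
    exact hV0 (funext fun i => by simp)

end QuadraticExtension

end QF

theorem stmt0_general (F : Type*) [Field F]
    (a b t : F) (ht0 : t ≠ 0) (ht : IsSumSq t)
    (hniso : ¬ QF.WeaklyIsotropic ![1, a, b, -(a * b)])
    (K : Type*) [Field K] [Algebra F K] (s : K)
    (hs : s ^ 2 = algebraMap F K t) (hgen : Algebra.adjoin F {s} = ⊤) :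
    ¬ QF.WeaklyIsotropic (fun i => algebraMap F K (![1, a, b, -(a * b)] i)) := by
  rintro ⟨n, hn, hiso⟩
  obtain ⟨x, y, hxy, h⟩ :=
    QF.exists_qval_add_mul_qval_eq_zero hs hgen (d := QF.copies n ![1, a, b, -(a * b)]) hiso
  exact hniso ((QF.WeaklyIsotropic.of_qval_add_mul_qval_eq_zero ht ht0 hxy h).of_copies hn)

/-- If `⟨1,a,b,-ab⟩` is not weakly isotropic over `F`, it remains not
weakly isotropic over `F(√t)` for `t` a nonzero sum of squares, where `F(√t)` is any
field extension of `F` generated by a square root of `t`. -/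
theorem stmt0 (F : Type*) [Field F] (hchar : (2 : F) ≠ 0)
    (a b t : F) (ha : a ≠ 0) (hb : b ≠ 0) (ht0 : t ≠ 0) (ht : IsSumSq t)
    (hniso : ¬ QF.WeaklyIsotropic ![1, a, b, -(a * b)])
    (K : Type*) [Field K] [Algebra F K] (s : K)
    (hs : s ^ 2 = algebraMap F K t) (hgen : Algebra.adjoin F {s} = ⊤) :
    ¬ QF.WeaklyIsotropic (fun i => algebraMap F K (![1, a, b, -(a * b)] i)) :=
  stmt0_general F a b t ht0 ht hniso K s hs hgen
end

section
/- Let F be a field of characteristic not 2 and q a quadratic form over F such that n × q is isotropic for some n ≥ 1, and m × ⟨1,-t⟩ is isotropic for some m ≥ 1 where ⟨1,-t⟩ is similar to a subform of n × q. Then mn × q is isotropic; in particular, if a binary form ⟨1,-t⟩ with t a totally positive element is represented by a multiple of q, then q is weakly isotropic. -/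
open scoped BigOperators ENat Classical

/-!
If `n × q ≅ c⟨1,-t⟩ ⊥ τ`, then `mn × q ≅ m × (c⟨1,-t⟩) ⊥ m × τ`, so an isotropic vector of
`m × ⟨1,-t⟩`, extended by zero, is isotropic for `mn × q`. When `t` is a sum of `k` squares,
`(k + 1) × ⟨1,-t⟩` is isotropic, which gives weak isotropy of `q`.
-/

namespace QF

variable {F : Type*} [Field F] {ι κ : Type*} [Fintype ι] [Fintype κ]

lemma qval_copies_s2 {m : ℕ} (e : ι → F) (u : Fin m × ι → F) :
    qval (copies m e) u = ∑ i, qval e (fun j => u (i, j)) := by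
  simp [qval, copies, Fintype.sum_prod_type]

lemma qval_sumForm (e : ι → F) (τ : κ → F) (v : ι ⊕ κ → F) :
    qval (sumForm e τ) v = qval e (v ∘ Sum.inl) + qval τ (v ∘ Sum.inr) := by
  simp [qval, sumForm, Fintype.sum_sum_type]

lemma qval_const_mul (c : F) (e v : ι → F) :
    qval (fun i => c * e i) v = c * qval e v := by
  simp [qval, Finset.mul_sum, mul_assoc]

lemma isotropic_comp_equiv (d : ι → F) (σ : κ ≃ ι) : Isotropic (d ∘ σ) ↔ Isotropic d := by
  have hq : ∀ v : ι → F, qval (d ∘ σ) (v ∘ σ) = qval d v := fun v =>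
    Equiv.sum_comp σ (fun i => d i * v i ^ 2)
  constructor
  · rintro ⟨v, hv, hv0⟩
    refine ⟨v ∘ σ.symm, fun h => hv ?_, ?_⟩
    · funext i
      simpa using congrFun h (σ i)
    · rw [← hq, Function.comp_assoc, σ.symm_comp_self, Function.comp_id, hv0]
  · rintro ⟨v, hv, hv0⟩
    refine ⟨v ∘ σ, fun h => hv ?_, by rw [hq, hv0]⟩
    funext i
    simpa using congrFun h (σ.symm i)

lemma Isometric.isotropic_iff {d : ι → F} {e : κ → F} (h : Isometric d e) :
    Isotropic d ↔ Isotropic e := by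
  obtain ⟨f, hf⟩ := h
  constructor
  · rintro ⟨v, hv, hv0⟩
    exact ⟨f v, by simpa using hv, by rw [hf, hv0]⟩
  · rintro ⟨w, hw, hw0⟩
    exact ⟨f.symm w, by simpa using hw, by rw [← hf, f.apply_symm_apply, hw0]⟩

lemma Isometric.copies {d : ι → F} {e : κ → F} (h : Isometric d e) (m : ℕ) :
    Isometric (QF.copies m d) (QF.copies m e) := by
  obtain ⟨f, hf⟩ := h
  refine ⟨(LinearEquiv.curry F F _ _).trans
    ((LinearEquiv.piCongrRight fun _ => f).trans (LinearEquiv.curry F F _ _).symm), fun v => ?_⟩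
  simp only [qval_copies_s2]
  exact Finset.sum_congr rfl fun i _ => hf fun j => v (i, j)

lemma Isotropic.const_mul {e : ι → F} (h : Isotropic e) (c : F) :
    Isotropic (fun i => c * e i) := by
  obtain ⟨v, hv, hv0⟩ := h
  exact ⟨v, hv, by rw [qval_const_mul, hv0, mul_zero]⟩

lemma Isotropic.sumForm {e : ι → F} (h : Isotropic e) (τ : κ → F) :
    Isotropic (QF.sumForm e τ) := by
  obtain ⟨v, hv, hv0⟩ := h
  refine ⟨Sum.elim v 0, fun h0 => hv ?_, ?_⟩
  · simpa using congrArg (· ∘ Sum.inl) h0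
  · rw [qval_sumForm, Sum.elim_comp_inl, Sum.elim_comp_inr, hv0]
    simp [qval]

lemma Isotropic.copies {e : ι → F} (h : Isotropic e) {m : ℕ} (hm : 1 ≤ m) :
    Isotropic (QF.copies m e) := by
  obtain ⟨v, hv, hv0⟩ := h
  let i₀ : Fin m := ⟨0, hm⟩
  refine ⟨fun p => if p.1 = i₀ then v p.2 else 0, fun h0 => hv ?_, ?_⟩
  · funext j
    simpa using congrFun h0 (i₀, j)
  · rw [qval_copies_s2, Finset.sum_eq_single i₀ (fun i _ hi => by simp [hi, qval]) (by simp)]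
    simpa using hv0

lemma isotropic_copies_copies_iff (d : ι → F) (m n : ℕ) :
    Isotropic (copies m (copies n d)) ↔ Isotropic (copies (m * n) d) :=
  isotropic_comp_equiv (copies (m * n) d)
    ((Equiv.prodAssoc _ _ _).symm.trans (finProdFinEquiv.prodCongr (Equiv.refl ι)))

lemma Isotropic.copies_of_simSubform {β : κ → F} {e : ι → F} {m : ℕ}
    (hβ : Isotropic (QF.copies m β)) (h : SimSubform β e) : Isotropic (QF.copies m e) := by
  obtain ⟨c, -, k, τ, he⟩ := h
  have hdistrib : QF.copies m (QF.sumForm (fun i => c * β i) τ) ∘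
      (Equiv.prodSumDistrib (Fin m) κ (Fin k)).symm =
      QF.sumForm (fun p => c * QF.copies m β p) (QF.copies m τ) := by
    funext x
    rcases x with _ | _ <;> rfl
  rw [(he.copies m).isotropic_iff, ← isotropic_comp_equiv _ (Equiv.prodSumDistrib _ _ _).symm,
    hdistrib]
  exact (hβ.const_mul c).sumForm (QF.copies m τ)

lemma _root_.IsSumSq.exists_eq_sum_sq {t : F} (h : IsSumSq t) :
    ∃ (k : ℕ) (f : Fin k → F), t = ∑ i, f i ^ 2 := by
  induction h with
  | zero => exact ⟨0, ![], by simp⟩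
  | sq_add a _ ih =>
      obtain ⟨k, f, rfl⟩ := ih
      exact ⟨k + 1, Fin.cons a f, by simp [Fin.sum_univ_succ, sq]⟩

/-- For `t = ∑ fᵢ²` the vector with `x = (0, f₀, …, f_{k-1})` on the `1`-slots and
`y = (1, 0, …, 0)` on the `-t`-slots is isotropic. -/
lemma isotropic_copies_one_neg_sum_sq {k : ℕ} (f : Fin k → F) :
    Isotropic (copies (k + 1) ![1, -∑ i, f i ^ 2]) := by
  refine ⟨fun p => ![(Fin.cons 0 f : Fin (k + 1) → F) p.1, if p.1 = 0 then 1 else 0] p.2,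
    fun h0 => by simpa using congrFun h0 (0, 1), ?_⟩
  rw [qval_copies_s2]
  simp [qval, Fin.sum_univ_succ]

lemma _root_.IsSumSq.exists_isotropic_copies {t : F} (ht : IsSumSq t) :
    ∃ m, 1 ≤ m ∧ Isotropic (copies m ![1, -t]) := by
  obtain ⟨k, f, rfl⟩ := ht.exists_eq_sum_sq
  exact ⟨k + 1, by omega, isotropic_copies_one_neg_sum_sq f⟩

end QF

theorem stmt2_general (F : Type*) [Field F]
    {ι : Type*} [Fintype ι] (d : ι → F) :
    (∀ (n m : ℕ) (t : F), 1 ≤ n → 1 ≤ m →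
      QF.Isotropic (QF.copies n d) →
      QF.Isotropic (QF.copies m ![1, -t]) →
      QF.SimSubform ![1, -t] (QF.copies n d) →
      QF.Isotropic (QF.copies (m * n) d)) ∧
    (∀ t : F, IsSumSq t → t ≠ 0 →
      (∃ n : ℕ, 1 ≤ n ∧ QF.SimSubform ![1, -t] (QF.copies n d)) →
      QF.WeaklyIsotropic d) := by
  refine ⟨fun n m t _ hm hd _ _ => ?_, fun t ht _ ⟨n, hn, hsub⟩ => ?_⟩
  · exact (QF.isotropic_copies_copies_iff d m n).mp (hd.copies hm)
  · obtain ⟨m, hm, hbin⟩ := ht.exists_isotropic_copies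
    exact ⟨m * n, Nat.mul_pos hm hn,
      (QF.isotropic_copies_copies_iff d m n).mp (QF.Isotropic.copies_of_simSubform hbin hsub)⟩

/-- If `n × q` is isotropic (`n ≥ 1`), `m × ⟨1,-t⟩` is isotropic (`m ≥ 1`),
and `⟨1,-t⟩` is similar to a subform of `n × q`, then `mn × q` is isotropic.
In particular, if `⟨1,-t⟩` with `t` totally positive is similar to a subform of some
multiple of `q`, then `q` is weakly isotropic. -/
theorem stmt2 (F : Type*) [Field F] (hchar : (2 : F) ≠ 0)
    {ι : Type*} [Fintype ι] (d : ι → F) :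
    (∀ (n m : ℕ) (t : F), 1 ≤ n → 1 ≤ m →
      QF.Isotropic (QF.copies n d) →
      QF.Isotropic (QF.copies m ![1, -t]) →
      QF.SimSubform ![1, -t] (QF.copies n d) →
      QF.Isotropic (QF.copies (m * n) d)) ∧
    (∀ t : F, IsSumSq t → t ≠ 0 →
      (∃ n : ℕ, 1 ≤ n ∧ QF.SimSubform ![1, -t] (QF.copies n d)) →
      QF.WeaklyIsotropic d) :=
  stmt2_general F d
end

section
/- Let F be a field of characteristic not 2. F satisfies SAP if and only if for all a, b ∈ F* the quadratic form ⟨1, a, b, -ab⟩ is weakly isotropic. -/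
open scoped BigOperators ENat Classical

/-!
SAP holds iff for all `a, b ≠ 0` the set `H(a) ∩ H(b)` is again a Harrison set: Harrison sets
are clopen and `H(a)ᶜ = H(-a)`, so they then form a basis of the compact space of orderings that
is closed under finite unions, and compactness writes every clopen set as one of them.

For fixed `a, b` this intersection property is equivalent to weak isotropy of `⟨1, a, b, -ab⟩`.
Over a formally real field, weak isotropy means `σ₀ + a σ₁ + b σ₂ - ab σ₃ = 0` for sums of squares
`σᵢ`, not all zero. Such a relation exhibits `H(a) ∩ H(b)` as `H(a σ₁ + b σ₂)` (or as `H(a)`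
or `∅` in degenerate cases). Conversely, if `H(a) ∩ H(b) = H(c)`, no ordering makes both `-ac` and
`-bc` nonnegative, and every ordering with `ab < 0` has `c < 0`; the abstract Positivstellensatz
(a proper preordering extends to an ordering, by Zorn) turns these two sign conditions into
identities among sums of squares that combine into the required relation. If `-1` is a sum of
squares, there are no orderings and both sides hold trivially.
-/

namespace QF

variable {F : Type*} [Field F]

theorem _root_.IsSumSq.div {x y : F} (hx : IsSumSq x) (hy : IsSumSq y) : IsSumSq (x / y) := by
  rw [show x / y = x * y * y⁻¹ ^ 2 by rcases eq_or_ne y 0 with rfl | hy0 <;> field_simp]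
  exact (hx.mul hy).mul (IsSquare.sq _).isSumSq

theorem _root_.IsSumSq.exists_isSumSqOf_s9 {x : F} (hx : IsSumSq x) : ∃ n, IsSumSqOf n x := by
  induction hx with
  | zero => exact ⟨0, ![], by simp⟩
  | sq_add a _ ih =>
    obtain ⟨n, f, rfl⟩ := ih
    exact ⟨n + 1, Fin.cons a f, by simp [Fin.sum_univ_succ, sq]⟩

theorem IsSumSqOf.mono {m k : ℕ} {x : F} (hx : IsSumSqOf m x) (hmk : m ≤ k) :
    IsSumSqOf k x := by
  induction k, hmk using Nat.le_induction with
  | base => exact hx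
  | succ k _ ih =>
    obtain ⟨f, rfl⟩ := ih
    exact ⟨Fin.cons 0 f, by simp [Fin.sum_univ_succ]⟩

theorem eq_zero_of_sum_sq_eq_zero (h1 : ¬IsSumSq (-1 : F)) {ι : Type*} [Fintype ι]
    {f : ι → F} (hf : ∑ j, f j ^ 2 = 0) (j : ι) : f j = 0 := by
  classical
  by_contra hj
  refine h1 ?_
  have hrest : ∑ k ∈ Finset.univ.erase j, f k ^ 2 = -f j ^ 2 := by
    linear_combination hf + Finset.add_sum_erase _ (fun k => f k ^ 2) (Finset.mem_univ j)
  have : (-1 : F) = (∑ k ∈ Finset.univ.erase j, f k ^ 2) / f j ^ 2 := by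
    rw [hrest]; field_simp
  rw [this]
  exact (IsSumSq.sum_sq _ _).div (IsSquare.sq _).isSumSq

section Forms

variable {ι : Type*} [Fintype ι]

theorem weaklyIsotropic_iff_exists_sum_sq (d : ι → F) :
    WeaklyIsotropic d ↔ ∃ (n : ℕ) (v : Fin n × ι → F), v ≠ 0 ∧
      ∑ i, d i * ∑ j, v (j, i) ^ 2 = 0 := by
  have hq : ∀ n (v : Fin n × ι → F), qval (copies n d) v = ∑ i, d i * ∑ j, v (j, i) ^ 2 := by
    intro n v
    simp only [qval, copies, Fintype.sum_prod_type, Finset.mul_sum]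
    exact Finset.sum_comm
  refine ⟨fun ⟨n, _, v, hv, h⟩ => ⟨n, v, hv, hq n v ▸ h⟩, fun ⟨n, v, hv, h⟩ => ?_⟩
  obtain ⟨⟨j, _⟩, -⟩ := Function.ne_iff.mp hv
  exact ⟨n, Fin.pos j, v, hv, (hq n v).trans h⟩

theorem weaklyIsotropic_of_isSumSq_neg_one [Nonempty ι] (h1 : IsSumSq (-1 : F)) (d : ι → F) :
    WeaklyIsotropic d := by
  obtain ⟨n, f, hf⟩ := h1.exists_isSumSqOf_s9
  refine (weaklyIsotropic_iff_exists_sum_sq d).mpr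
    ⟨n + 1, fun p => (Fin.cons 1 f : Fin (n + 1) → F) p.1, fun h => ?_, ?_⟩
  · simpa using congrFun h (0, Classical.arbitrary ι)
  · simp [Fin.sum_univ_succ, ← hf]

theorem weaklyIsotropic_iff_exists_isSumSq (h1 : ¬IsSumSq (-1 : F)) (d : ι → F) :
    WeaklyIsotropic d ↔
      ∃ σ : ι → F, (∀ i, IsSumSq (σ i)) ∧ σ ≠ 0 ∧ ∑ i, d i * σ i = 0 := by
  rw [weaklyIsotropic_iff_exists_sum_sq]
  constructor
  · rintro ⟨n, v, hv, h⟩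
    refine ⟨fun i => ∑ j, v (j, i) ^ 2, fun i => IsSumSq.sum_sq _ _, fun h0 => hv ?_, h⟩
    ext ⟨j, i⟩
    exact eq_zero_of_sum_sq_eq_zero h1 (congrFun h0 i) j
  · rintro ⟨σ, hσ, hσ0, h⟩
    choose n hn using fun i => (hσ i).exists_isSumSqOf_s9
    choose f hf using fun i => (hn i).mono (Finset.single_le_sum (fun i _ => (n i).zero_le)
      (Finset.mem_univ i))
    refine ⟨_, fun p => f p.2 p.1, fun h0 => hσ0 (funext fun i => ?_), by simpa [← hf] using h⟩
    simp [hf i, show f i = 0 from funext fun j => congrFun h0 (j, i)]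

theorem weaklyIsotropic_quaternary_iff (h1 : ¬IsSumSq (-1 : F)) (a b : F) :
    WeaklyIsotropic ![1, a, b, -(a * b)] ↔
      ∃ σ₀ σ₁ σ₂ σ₃ : F, IsSumSq σ₀ ∧ IsSumSq σ₁ ∧ IsSumSq σ₂ ∧ IsSumSq σ₃ ∧
        ¬(σ₀ = 0 ∧ σ₁ = 0 ∧ σ₂ = 0 ∧ σ₃ = 0) ∧ σ₀ + a * σ₁ + b * σ₂ - a * b * σ₃ = 0 := by
  rw [weaklyIsotropic_iff_exists_isSumSq h1]
  constructor
  · rintro ⟨σ, hσ, hσ0, h⟩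
    refine ⟨σ 0, σ 1, σ 2, σ 3, hσ 0, hσ 1, hσ 2, hσ 3, fun h0 => hσ0 ?_, ?_⟩
    · ext i; fin_cases i <;> simp [h0]
    · simp [Fin.sum_univ_four] at h; linear_combination h
  · rintro ⟨σ₀, σ₁, σ₂, σ₃, h₀, h₁, h₂, h₃, hσ0, h⟩
    refine ⟨![σ₀, σ₁, σ₂, σ₃], fun i => ?_, fun h0 => hσ0 ?_, ?_⟩
    · fin_cases i <;> assumption
    · simpa using h0
    · simp [Fin.sum_univ_four]; linear_combination h

end Forms

/-- Unlike `RingPreordering`, this does not exclude `-1 ∈ T`; properness is assumed separately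
where needed. -/
structure IsPreordering (T : Set F) : Prop where
  sq_mem (x : F) : x ^ 2 ∈ T
  add_mem {x y : F} : x ∈ T → y ∈ T → x + y ∈ T
  mul_mem {x y : F} : x ∈ T → y ∈ T → x * y ∈ T

def adjoin (T : Set F) (g : F) : Set F :=
  {x | ∃ s ∈ T, ∃ t ∈ T, x = s + g * t}

namespace IsPreordering

variable {T : Set F}

theorem zero_mem (hT : IsPreordering T) : (0 : F) ∈ T := by simpa using hT.sq_mem 0

theorem one_mem (hT : IsPreordering T) : (1 : F) ∈ T := by simpa using hT.sq_mem 1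

theorem isSumSq_mem (hT : IsPreordering T) {x : F} (hx : IsSumSq x) : x ∈ T := by
  induction hx with
  | zero => exact hT.zero_mem
  | sq_add a _ ih => exact hT.add_mem (by simpa [sq] using hT.sq_mem a) ih

theorem adjoin (hT : IsPreordering T) (g : F) : IsPreordering (QF.adjoin T g) := by
  refine ⟨fun x => ⟨x ^ 2, hT.sq_mem x, 0, hT.zero_mem, by ring⟩, ?_, ?_⟩
  · rintro _ _ ⟨s, hs, t, ht, rfl⟩ ⟨s', hs', t', ht', rfl⟩
    exact ⟨s + s', hT.add_mem hs hs', t + t', hT.add_mem ht ht', by ring⟩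
  · rintro _ _ ⟨s, hs, t, ht, rfl⟩ ⟨s', hs', t', ht', rfl⟩
    exact ⟨s * s' + g ^ 2 * (t * t'),
      hT.add_mem (hT.mul_mem hs hs') (hT.mul_mem (hT.sq_mem g) (hT.mul_mem ht ht')),
      s * t' + t * s', hT.add_mem (hT.mul_mem hs ht') (hT.mul_mem ht hs'), by ring⟩

theorem subset_adjoin (hT : IsPreordering T) (g : F) : T ⊆ QF.adjoin T g :=
  fun s hs => ⟨s, hs, 0, hT.zero_mem, by ring⟩

theorem mem_adjoin_self (hT : IsPreordering T) (g : F) : g ∈ QF.adjoin T g :=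
  ⟨0, hT.zero_mem, 1, hT.one_mem, by ring⟩

/-- If `-1 = s - x t`, then `t ≠ 0` and `x = (1 + s) t / t²` would lie in `T`. -/
theorem neg_one_notMem_adjoin_neg (hT : IsPreordering T) (h1 : (-1 : F) ∉ T) {x : F}
    (hx : x ∉ T) : (-1 : F) ∉ QF.adjoin T (-x) := by
  rintro ⟨s, hs, t, ht, hst⟩
  rcases eq_or_ne t 0 with rfl | ht0
  · exact h1 (by simpa [hst] using hs)
  · refine hx ?_
    rw [show x = (1 + s) * t * t⁻¹ ^ 2 by field_simp; linear_combination hst]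
    exact hT.mul_mem (hT.mul_mem (hT.add_mem hT.one_mem hs) ht) (hT.sq_mem _)

theorem sUnion_of_isChain {c : Set (Set F)} (hc : ∀ T ∈ c, IsPreordering T)
    (hchain : IsChain (· ⊆ ·) c) (hne : c.Nonempty) : IsPreordering (⋃₀ c) := by
  obtain ⟨T₀, hT₀⟩ := hne
  have closed (op : F → F → F) (hop : ∀ T ∈ c, ∀ {x y}, x ∈ T → y ∈ T → op x y ∈ T)
      {x y : F} (hx : x ∈ ⋃₀ c) (hy : y ∈ ⋃₀ c) : op x y ∈ ⋃₀ c := by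
    obtain ⟨T, hT, hxT⟩ := hx
    obtain ⟨T', hT', hyT'⟩ := hy
    rcases hchain.total hT hT' with h | h
    · exact ⟨T', hT', hop T' hT' (h hxT) hyT'⟩
    · exact ⟨T, hT, hop T hT hxT (h hyT')⟩
  exact ⟨fun x => ⟨T₀, hT₀, (hc T₀ hT₀).sq_mem x⟩,
    closed (· + ·) fun T hT => (hc T hT).add_mem, closed (· * ·) fun T hT => (hc T hT).mul_mem⟩

theorem exists_fieldOrdering (hT : IsPreordering T) (h1 : (-1 : F) ∉ T) :
    ∃ P : FieldOrdering F, T ⊆ P.P := by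
  obtain ⟨M, hTM, hmax⟩ := zorn_subset_nonempty {S : Set F | IsPreordering S ∧ (-1 : F) ∉ S}
    (fun c hc hchain hne => ⟨⋃₀ c, ⟨sUnion_of_isChain (fun T hT => (hc hT).1) hchain hne,
      fun ⟨T, hT, h⟩ => (hc hT).2 h⟩, fun _ => Set.subset_sUnion_of_mem⟩) T ⟨hT, h1⟩
  obtain ⟨hM, hM1⟩ := hmax.prop
  have total (x : F) : x ∈ M ∨ -x ∈ M := by
    refine or_iff_not_imp_left.mpr fun hx => ?_
    have hle := hmax.2 ⟨hM.adjoin (-x), hM.neg_one_notMem_adjoin_neg hM1 hx⟩ (hM.subset_adjoin _)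
    exact hle (hM.mem_adjoin_self _)
  exact ⟨⟨M, fun _ _ => hM.add_mem, fun _ _ => hM.mul_mem, total, hM1⟩, hTM⟩

end IsPreordering

theorem isPreordering_isSumSq : IsPreordering {x : F | IsSumSq x} :=
  ⟨fun x => (IsSquare.sq x).isSumSq, IsSumSq.add, IsSumSq.mul⟩

namespace FieldOrdering

variable (P : FieldOrdering F) {x y : F}

theorem isPreordering : IsPreordering P.P where
  sq_mem x := (P.total x).elim (fun h => by simpa [sq] using P.mul_mem _ _ h h)
    (fun h => by simpa [sq] using P.mul_mem _ _ h h)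
  add_mem := P.add_mem _ _
  mul_mem := P.mul_mem _ _

theorem isSumSq_mem (hx : IsSumSq x) : x ∈ P.P := P.isPreordering.isSumSq_mem hx

theorem neg_mem_of_notMem (hx : x ∉ P.P) : -x ∈ P.P := (P.total x).resolve_left hx

theorem eq_zero_of_mem_of_neg_mem (hx : x ∈ P.P) (hnx : -x ∈ P.P) : x = 0 := by
  by_contra hx0
  refine P.neg_one_notMem ?_
  have := P.mul_mem _ _ (P.mul_mem _ _ hnx hx) (P.isPreordering.sq_mem x⁻¹)
  rwa [show -x * x * x⁻¹ ^ 2 = -1 by field_simp] at this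

theorem mem_of_mul_mem (hx : x ∈ P.P) (hx0 : x ≠ 0) (h : x * y ∈ P.P) : y ∈ P.P := by
  have := P.mul_mem _ _ (P.mul_mem _ _ h hx) (P.isPreordering.sq_mem x⁻¹)
  rwa [show x * y * x * x⁻¹ ^ 2 = y by field_simp] at this

end FieldOrdering

theorem isEmpty_fieldOrdering (h1 : IsSumSq (-1 : F)) : IsEmpty (FieldOrdering F) :=
  ⟨fun P => P.neg_one_notMem (P.isSumSq_mem h1)⟩

theorem IsPreordering.mem_of_forall_fieldOrdering {T : Set F} (hT : IsPreordering T)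
    (h1 : (-1 : F) ∉ T) {x : F} (hx : ∀ P : FieldOrdering F, T ⊆ P.P → x ∈ P.P) : x ∈ T := by
  by_contra hxT
  obtain ⟨P, hP⟩ := (hT.adjoin (-x)).exists_fieldOrdering (hT.neg_one_notMem_adjoin_neg h1 hxT)
  have hx0 := P.eq_zero_of_mem_of_neg_mem (hx P ((hT.subset_adjoin _).trans hP))
    (hP (hT.mem_adjoin_self _))
  exact hxT (hx0 ▸ hT.zero_mem)

theorem exists_isSumSq_neg_one_eq {g₁ g₂ : F} (h : ∀ P : FieldOrdering F, g₁ ∈ P.P → g₂ ∉ P.P) :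
    ∃ s₀ s₁ s₂ s₃ : F, IsSumSq s₀ ∧ IsSumSq s₁ ∧ IsSumSq s₂ ∧ IsSumSq s₃ ∧
      -1 = s₀ + g₁ * s₁ + g₂ * s₂ + g₁ * g₂ * s₃ := by
  have hT₁ := isPreordering_isSumSq.adjoin (F := F) g₁
  by_cases h1 : (-1 : F) ∈ adjoin (adjoin {x | IsSumSq x} g₁) g₂
  · obtain ⟨_, ⟨s₀, hs₀, s₁, hs₁, rfl⟩, _, ⟨s₂, hs₂, s₃, hs₃, rfl⟩, h⟩ := h1
    exact ⟨s₀, s₁, s₂, s₃, hs₀, hs₁, hs₂, hs₃, by linear_combination h⟩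
  · obtain ⟨P, hP⟩ := (hT₁.adjoin g₂).exists_fieldOrdering h1
    exact absurd (hP (hT₁.mem_adjoin_self g₂))
      (h P (hP (hT₁.subset_adjoin g₂ (isPreordering_isSumSq.mem_adjoin_self g₁))))

theorem mem_harrison_iff {a : F} (ha : a ≠ 0) {P : FieldOrdering F} :
    P ∈ Harrison F a ↔ a ∈ P.P :=
  ⟨And.left, fun h => ⟨h, fun h' => ha (P.eq_zero_of_mem_of_neg_mem h h')⟩⟩

theorem harrison_compl {a : F} (ha : a ≠ 0) : (Harrison F a)ᶜ = Harrison F (-a) := by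
  ext P
  rw [Set.mem_compl_iff, mem_harrison_iff ha, mem_harrison_iff (neg_ne_zero.mpr ha)]
  exact ⟨P.neg_mem_of_notMem, fun h h' => ha (P.eq_zero_of_mem_of_neg_mem h' h)⟩

theorem harrison_one : Harrison F 1 = Set.univ :=
  Set.eq_univ_of_forall fun P => (mem_harrison_iff one_ne_zero).mpr P.isPreordering.one_mem

theorem harrison_neg_one : Harrison F (-1) = ∅ :=
  Set.eq_empty_of_forall_notMem fun P h => P.neg_one_notMem h.1

theorem isOpen_harrison {a : F} (ha : a ≠ 0) : IsOpen (Harrison F a) :=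
  TopologicalSpace.isOpen_generateFrom_of_mem ⟨a, ha, rfl⟩

theorem isClopen_harrison {a : F} (ha : a ≠ 0) : IsClopen (Harrison F a) :=
  ⟨by rw [← isOpen_compl_iff, harrison_compl ha]; exact isOpen_harrison (neg_ne_zero.mpr ha),
    isOpen_harrison ha⟩

noncomputable def FieldOrdering.toBoolFun (P : FieldOrdering F) : F → Bool :=
  fun x => decide (x ∈ P.P)

theorem isClopen_setOf_mem (x : F) : IsClopen {P : FieldOrdering F | x ∈ P.P} := by
  rcases eq_or_ne x 0 with rfl | hx
  · convert isClopen_univ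
    exact Set.eq_univ_of_forall fun P => P.isPreordering.zero_mem
  · convert isClopen_harrison hx using 1
    ext P
    exact (mem_harrison_iff hx).symm

theorem isInducing_toBoolFun : Topology.IsInducing (FieldOrdering.toBoolFun (F := F)) := by
  refine ⟨le_antisymm (continuous_iff_le_induced.mp ?_) (le_generateFrom ?_)⟩
  · refine continuous_pi fun x => continuous_discrete_rng.mpr fun b => ?_
    cases b
    · convert (isClopen_setOf_mem x).compl.isOpen using 1
      ext P
      simp [FieldOrdering.toBoolFun]
    · convert (isClopen_setOf_mem x).isOpen using 1
      ext P
      simp [FieldOrdering.toBoolFun]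
  · rintro _ ⟨a, -, rfl⟩
    refine isOpen_induced_iff.mpr ⟨{f | f a = true ∧ f (-a) = false}, ?_, ?_⟩
    · exact (isOpen_discrete {p : Bool × Bool | p.1 = true ∧ p.2 = false}).preimage
        (by fun_prop : Continuous fun f : F → Bool => (f a, f (-a)))
    · ext P
      simp [FieldOrdering.toBoolFun, Harrison]

theorem isClosed_range_toBoolFun :
    IsClosed (Set.range (FieldOrdering.toBoolFun (F := F))) := by
  have hrange : Set.range (FieldOrdering.toBoolFun (F := F)) = ⋂ x, ⋂ y,
      {f : F → Bool | (f x → f y → f (x + y)) ∧ (f x → f y → f (x * y)) ∧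
        (f x ∨ f (-x)) ∧ f (-1) = false} := by
    ext f
    simp only [Set.mem_range, Set.mem_iInter, Set.mem_ofPred_eq]
    constructor
    · rintro ⟨P, rfl⟩ x y
      simp only [FieldOrdering.toBoolFun, decide_eq_true_eq, decide_eq_false_iff_not]
      exact ⟨P.add_mem x y, P.mul_mem x y, P.total x, P.neg_one_notMem⟩
    · intro h
      refine ⟨⟨{x | f x}, fun x y => (h x y).1, fun x y => (h x y).2.1,
        fun x => (h x 0).2.2.1, by simpa using (h 0 0).2.2.2⟩, funext fun x => ?_⟩
      simp [FieldOrdering.toBoolFun]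
  rw [hrange]
  refine isClosed_iInter fun x => isClosed_iInter fun y => ?_
  exact (isClosed_discrete {p : Bool × Bool × Bool × Bool × Bool × Bool |
      (p.1 → p.2.1 → p.2.2.1) ∧ (p.1 → p.2.1 → p.2.2.2.1) ∧ (p.1 ∨ p.2.2.2.2.1) ∧
        p.2.2.2.2.2 = false}).preimage
    (by fun_prop : Continuous fun f : F → Bool => (f x, f y, f (x + y), f (x * y), f (-x), f (-1)))

instance : CompactSpace (FieldOrdering F) :=
  ⟨by rw [isInducing_toBoolFun.isCompact_iff, Set.image_univ]
      exact isClosed_range_toBoolFun.isCompact⟩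

theorem exists_union_harrison_eq {a b : F}
    (hinter : ∀ x y : F, x ≠ 0 → y ≠ 0 → ∃ z, z ≠ 0 ∧ Harrison F x ∩ Harrison F y = Harrison F z)
    (ha : a ≠ 0) (hb : b ≠ 0) : ∃ c, c ≠ 0 ∧ Harrison F a ∪ Harrison F b = Harrison F c := by
  obtain ⟨c, hc, hH⟩ := hinter (-a) (-b) (neg_ne_zero.mpr ha) (neg_ne_zero.mpr hb)
  refine ⟨-c, neg_ne_zero.mpr hc, ?_⟩
  rw [← compl_inj_iff, Set.compl_union, harrison_compl ha, harrison_compl hb,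
    harrison_compl (neg_ne_zero.mpr hc), neg_neg, hH]

theorem isSAP_iff_forall_exists_inter_harrison_eq :
    IsSAP F ↔ ∀ a b : F, a ≠ 0 → b ≠ 0 →
      ∃ c, c ≠ 0 ∧ Harrison F a ∩ Harrison F b = Harrison F c := by
  refine ⟨fun hF a b ha hb => hF _ ((isClopen_harrison ha).inter (isClopen_harrison hb)),
    fun hinter s hs => ?_⟩
  let H : {a : F // a ≠ 0} → Set (FieldOrdering F) := fun a => Harrison F a
  have hbasis : TopologicalSpace.IsTopologicalBasis (Set.range H) := by
    have hrange : Set.range H = {s | ∃ a : F, a ≠ 0 ∧ s = Harrison F a} := by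
      ext
      exact ⟨fun ⟨a, h⟩ => ⟨a, a.2, h.symm⟩, fun ⟨a, ha, h⟩ => ⟨⟨a, ha⟩, h.symm⟩⟩
    have huniv : Set.univ ∈ {s | ∃ a : F, a ≠ 0 ∧ s = Harrison F a} :=
      ⟨1, one_ne_zero, harrison_one.symm⟩
    rw [hrange, ← Set.insert_eq_of_mem huniv]
    refine TopologicalSpace.isTopologicalBasis_of_subbasis_of_inter rfl ?_
    rintro _ ⟨a, ha, rfl⟩ _ ⟨b, hb, rfl⟩
    obtain ⟨c, hc, h⟩ := hinter a b ha hb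
    exact ⟨c, hc, h⟩
  obtain ⟨t, ht, rfl⟩ := eq_finite_iUnion_of_isTopologicalBasis_of_isCompact_open H hbasis s
    hs.isClosed.isCompact hs.isOpen
  clear hs
  induction t, ht using Set.Finite.induction_on with
  | empty => exact ⟨-1, by norm_num, by simp [harrison_neg_one]⟩
  | @insert x t _ _ ih =>
    obtain ⟨c, hc, h⟩ := ih
    obtain ⟨d, hd, h'⟩ := exists_union_harrison_eq hinter x.2 hc
    exact ⟨d, hd, by rw [Set.biUnion_insert, h, ← h']⟩

section Quaternary

variable {a b : F}

theorem inter_harrison_eq_harrison_add {σ₀ σ₁ σ₂ σ₃ : F} (ha : a ≠ 0) (hb : b ≠ 0)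
    (h₀ : IsSumSq σ₀) (h₁ : IsSumSq σ₁) (h₂ : IsSumSq σ₂) (h₃ : IsSumSq σ₃)
    (hu : a * σ₁ + b * σ₂ ≠ 0) (h : σ₀ + a * σ₁ + b * σ₂ - a * b * σ₃ = 0) :
    Harrison F a ∩ Harrison F b = Harrison F (a * σ₁ + b * σ₂) := by
  ext P
  simp only [Set.mem_inter_iff, mem_harrison_iff ha, mem_harrison_iff hb, mem_harrison_iff hu]
  refine ⟨fun ⟨hPa, hPb⟩ => P.add_mem _ _ (P.mul_mem _ _ hPa (P.isSumSq_mem h₁))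
    (P.mul_mem _ _ hPb (P.isSumSq_mem h₂)), fun hPu => ?_⟩
  by_contra hPab
  refine hu (P.eq_zero_of_mem_of_neg_mem hPu ?_)
  have hmixed (hneg : -(a * b) ∈ P.P) : -(a * σ₁ + b * σ₂) ∈ P.P := by
    have := P.add_mem _ _ (P.isSumSq_mem h₀) (P.mul_mem _ _ hneg (P.isSumSq_mem h₃))
    rwa [show σ₀ + -(a * b) * σ₃ = -(a * σ₁ + b * σ₂) by linear_combination h] at this
  by_cases hPa : a ∈ P.P <;> by_cases hPb : b ∈ P.P
  · exact absurd ⟨hPa, hPb⟩ hPab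
  · exact hmixed (by simpa using P.mul_mem _ _ hPa (P.neg_mem_of_notMem hPb))
  · exact hmixed (by simpa using P.mul_mem _ _ (P.neg_mem_of_notMem hPa) hPb)
  · have := P.add_mem _ _ (P.mul_mem _ _ (P.neg_mem_of_notMem hPa) (P.isSumSq_mem h₁))
      (P.mul_mem _ _ (P.neg_mem_of_notMem hPb) (P.isSumSq_mem h₂))
    rwa [show -a * σ₁ + -b * σ₂ = -(a * σ₁ + b * σ₂) by ring] at this

theorem inter_harrison_eq_left (hab : IsSumSq (a * b)) (hab0 : a * b ≠ 0) :
    Harrison F a ∩ Harrison F b = Harrison F a := by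
  have ha := left_ne_zero_of_mul hab0
  refine Set.inter_eq_left.mpr fun P hPa => (mem_harrison_iff (right_ne_zero_of_mul hab0)).mpr ?_
  rw [mem_harrison_iff ha] at hPa
  exact P.mem_of_mul_mem hPa ha (P.isSumSq_mem hab)

theorem inter_harrison_eq_empty {σ₁ σ₂ : F} (ha : a ≠ 0) (hb : b ≠ 0) (h₁ : IsSumSq σ₁)
    (h₂ : IsSumSq σ₂) (hσ₁ : σ₁ ≠ 0) (h : a * σ₁ + b * σ₂ = 0) :
    Harrison F a ∩ Harrison F b = ∅ := by
  refine Set.eq_empty_of_forall_notMem fun P ⟨hPa, hPb⟩ => ?_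
  rw [mem_harrison_iff ha] at hPa
  rw [mem_harrison_iff hb] at hPb
  have hneg := P.mul_mem _ _ hPb (P.isSumSq_mem h₂)
  rw [show b * σ₂ = -(a * σ₁) by linear_combination h] at hneg
  exact mul_ne_zero ha hσ₁
    (P.eq_zero_of_mem_of_neg_mem (P.mul_mem _ _ hPa (P.isSumSq_mem h₁)) hneg)

theorem exists_inter_harrison_eq_of_weaklyIsotropic (h1 : ¬IsSumSq (-1 : F)) (ha : a ≠ 0)
    (hb : b ≠ 0) (hw : WeaklyIsotropic ![1, a, b, -(a * b)]) :
    ∃ c, c ≠ 0 ∧ Harrison F a ∩ Harrison F b = Harrison F c := by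
  obtain ⟨σ₀, σ₁, σ₂, σ₃, h₀, h₁, h₂, h₃, hσ, h⟩ := (weaklyIsotropic_quaternary_iff h1 a b).mp hw
  by_cases hu : a * σ₁ + b * σ₂ = 0
  · by_cases hσ₁ : σ₁ = 0
    · have hσ₂ : σ₂ = 0 := (mul_eq_zero.mp (by simpa [hσ₁] using hu)).resolve_left hb
      have hσ₃ : σ₃ ≠ 0 := fun hσ₃ => hσ ⟨by simpa [hσ₁, hσ₂, hσ₃] using h, hσ₁, hσ₂, hσ₃⟩
      have hab : a * b = σ₀ / σ₃ := by
        field_simp; linear_combination hu - h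
      exact ⟨a, ha, inter_harrison_eq_left (hab ▸ h₀.div h₃) (mul_ne_zero ha hb)⟩
    · refine ⟨-1, by norm_num, ?_⟩
      rw [harrison_neg_one]
      exact inter_harrison_eq_empty ha hb h₁ h₂ hσ₁ hu
  · exact ⟨_, hu, inter_harrison_eq_harrison_add ha hb h₀ h₁ h₂ h₃ hu h⟩

theorem mem_iff_of_inter_harrison_eq {c : F} (ha : a ≠ 0) (hb : b ≠ 0) (hc : c ≠ 0)
    (hH : Harrison F a ∩ Harrison F b = Harrison F c) (P : FieldOrdering F) :
    c ∈ P.P ↔ a ∈ P.P ∧ b ∈ P.P := by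
  rw [← mem_harrison_iff hc, ← hH, Set.mem_inter_iff, mem_harrison_iff ha, mem_harrison_iff hb]

theorem exists_isSumSq_relation_of_inter_harrison_eq {c : F} (ha : a ≠ 0) (hb : b ≠ 0)
    (hc : c ≠ 0) (hH : Harrison F a ∩ Harrison F b = Harrison F c) :
    ∃ s₀ s₁ s₂ s₃ : F, IsSumSq s₀ ∧ IsSumSq s₁ ∧ IsSumSq s₂ ∧ IsSumSq s₃ ∧
      1 + s₀ + a * b * c ^ 2 * s₃ = c * (a * s₁ + b * s₂) := by
  have hcP := mem_iff_of_inter_harrison_eq ha hb hc hH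
  obtain ⟨s₀, s₁, s₂, s₃, h₀, h₁, h₂, h₃, hrel⟩ :=
    exists_isSumSq_neg_one_eq (g₁ := -(a * c)) (g₂ := -(b * c)) fun P hac hbc => by
      by_cases hPc : c ∈ P.P
      · exact mul_ne_zero ha hc
          (P.eq_zero_of_mem_of_neg_mem (P.mul_mem _ _ ((hcP P).mp hPc).1 hPc) hac)
      · have hnc := P.neg_mem_of_notMem hPc
        have hc' : -c ≠ 0 := neg_ne_zero.mpr hc
        exact hPc ((hcP P).mpr ⟨P.mem_of_mul_mem hnc hc' (by rwa [neg_mul, mul_comm c]),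
          P.mem_of_mul_mem hnc hc' (by rwa [neg_mul, mul_comm c])⟩)
  exact ⟨s₀, s₁, s₂, s₃, h₀, h₁, h₂, h₃, by linear_combination -hrel⟩

theorem weaklyIsotropic_of_isSumSq_neg_mul (h1 : ¬IsSumSq (-1 : F)) (ha : a ≠ 0)
    (hab : IsSumSq (-(a * b))) : WeaklyIsotropic ![1, a, b, -(a * b)] :=
  (weaklyIsotropic_quaternary_iff h1 a b).mpr ⟨0, -(a * b), a ^ 2, 0, .zero, hab,
    (IsSquare.sq a).isSumSq, .zero, fun h => pow_ne_zero 2 ha h.2.2.1, by ring⟩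

theorem weaklyIsotropic_of_inter_harrison_eq (h1 : ¬IsSumSq (-1 : F)) (ha : a ≠ 0)
    (hb : b ≠ 0) {c : F} (hc : c ≠ 0) (hH : Harrison F a ∩ Harrison F b = Harrison F c) :
    WeaklyIsotropic ![1, a, b, -(a * b)] := by
  obtain ⟨s₀, s₁, s₂, s₃, h₀, h₁, h₂, h₃, key⟩ :=
    exists_isSumSq_relation_of_inter_harrison_eq ha hb hc hH
  have hτ : IsSumSq (1 + s₀) := IsSumSq.one.add h₀
  have hτ0 : 1 + s₀ ≠ 0 := fun h => h1 (by rwa [show (-1 : F) = s₀ by linear_combination -h])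
  by_cases hu : a * s₁ + b * s₂ = 0
  · have hcs : c ^ 2 * s₃ ≠ 0 := fun h0 => hτ0 (by linear_combination key - a * b * h0 + c * hu)
    have hab : -(a * b) = (1 + s₀) / (c ^ 2 * s₃) := by
      rw [eq_div_iff hcs]
      linear_combination -key - c * hu
    exact weaklyIsotropic_of_isSumSq_neg_mul h1 ha
      (hab ▸ hτ.div ((IsSquare.sq c).isSumSq.mul h₃))
  rw [weaklyIsotropic_quaternary_iff h1]
  have hT := isPreordering_isSumSq.adjoin (F := F) (-(a * b))
  by_cases hT1 : (-1 : F) ∈ adjoin {x | IsSumSq x} (-(a * b))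
  · obtain ⟨s, hs, t, ht, hst⟩ := hT1
    exact ⟨1 + s, 0, 0, t, IsSumSq.one.add hs, .zero, .zero, ht,
      fun h => h1 (by rwa [show (-1 : F) = s by linear_combination -h.1]),
      by linear_combination -hst⟩
  have hneg (P : FieldOrdering F) (hP : adjoin {x | IsSumSq x} (-(a * b)) ⊆ P.P) :
      -(c * (a * s₁ + b * s₂) ^ 2) ∈ P.P := by
    have hcP := mem_iff_of_inter_harrison_eq ha hb hc hH P
    have hPc : c ∉ P.P := fun hPc => mul_ne_zero ha hb (P.eq_zero_of_mem_of_neg_mem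
      (P.mul_mem _ _ (hcP.mp hPc).1 (hcP.mp hPc).2) (hP (isPreordering_isSumSq.mem_adjoin_self _)))
    simpa using P.mul_mem _ _ (P.neg_mem_of_notMem hPc) (P.isPreordering.sq_mem (a * s₁ + b * s₂))
  obtain ⟨s, hs, t, ht, hst⟩ := hT.mem_of_forall_fieldOrdering hT1 hneg
  -- `key` gives `a σ₁ + b σ₂ = c (a s₁ + b s₂)²` for the two middle coefficients below.
  refine ⟨s, (1 + s₀) * s₁ + (b * c) ^ 2 * (s₂ * s₃), (1 + s₀) * s₂ + (a * c) ^ 2 * (s₁ * s₃), t,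
    hs, (hτ.mul h₁).add ((IsSquare.sq _).isSumSq.mul (h₂.mul h₃)),
    (hτ.mul h₂).add ((IsSquare.sq _).isSumSq.mul (h₁.mul h₃)), ht,
    fun ⟨hs0, _, _, ht0⟩ => mul_ne_zero hc (pow_ne_zero 2 hu)
      (by linear_combination -hst - hs0 + a * b * ht0), ?_⟩
  linear_combination (a * s₁ + b * s₂) * key - hst

theorem exists_inter_harrison_eq_iff_weaklyIsotropic (ha : a ≠ 0) (hb : b ≠ 0) :
    (∃ c, c ≠ 0 ∧ Harrison F a ∩ Harrison F b = Harrison F c) ↔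
      WeaklyIsotropic ![1, a, b, -(a * b)] := by
  by_cases h1 : IsSumSq (-1 : F)
  · have := isEmpty_fieldOrdering h1
    exact iff_of_true ⟨1, one_ne_zero, Subsingleton.elim _ _⟩
      (weaklyIsotropic_of_isSumSq_neg_one h1 _)
  · exact ⟨fun ⟨c, hc, hH⟩ => weaklyIsotropic_of_inter_harrison_eq h1 ha hb hc hH,
      exists_inter_harrison_eq_of_weaklyIsotropic h1 ha hb⟩

end Quaternary

end QF

theorem stmt9_general (F : Type*) [Field F] :
    QF.IsSAP F ↔
      ∀ a b : F, a ≠ 0 → b ≠ 0 → QF.WeaklyIsotropic ![1, a, b, -(a * b)] := by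
  rw [QF.isSAP_iff_forall_exists_inter_harrison_eq]
  exact forall₂_congr fun a b => forall₂_congr fun ha hb =>
    QF.exists_inter_harrison_eq_iff_weaklyIsotropic ha hb

/-- `F` satisfies SAP iff every form `⟨1,a,b,-ab⟩` (`a,b ∈ F*`) is weakly
isotropic. -/
theorem stmt9 (F : Type*) [Field F] (hchar : (2 : F) ≠ 0) :
    QF.IsSAP F ↔
      ∀ a b : F, a ≠ 0 → b ≠ 0 → QF.WeaklyIsotropic ![1, a, b, -(a * b)] :=
  stmt9_general F
end
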